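/- Assume |g_t| ≤ G almost surely for all t, for a constant G > 0, and let σ_t² := E[(g_t − μ_y)² | F_{t−1}]. Then for every t, Σ_{s=1}^t σ_s² ≤ 2t(G² + μ_y²) almost surely; consequently, for T ≥ 4 and any δ ∈ (0, 1/e), with probability at least 1 − δ, simultaneously for all t ∈ [T]: |w_{t+1} − μ_y| ≤ (2 max{ 2√(2t(G² + μ_y²)), (G + |μ_y|) √(log(log(T)/δ)) } · √(log(log(T)/δ)))/T + (1 − t/T)|μ_y|, a bound of order √t/T = O(1/√t) for t of order T. -/

import Mathlib

/-
STATEMENT 4: Assume |g_t| ≤ G almost surely for all t, for a constant G > 0, and let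
σ_t² := E[(g_t − μ_y)² | F_{t−1}]. Then for every t, Σ_{s=1}^t σ_s² ≤ 2t(G² + μ_y²) almost
surely; consequently, for T ≥ 4 and any δ ∈ (0, 1/e), with probability at least 1 − δ,
simultaneously for all t ∈ [T]:
|w_{t+1} − μ_y| ≤ (2 max{ 2√(2t(G² + μ_y²)), (G + |μ_y|) √(log(log(T)/δ)) } · √(log(log(T)/δ)))/T
                  + (1 − t/T)|μ_y|.
-/

open MeasureTheory ProbabilityTheory

/-- The setting of sequential active prediction-powered mean estimation:
a probability space with filtration `ℱ`, horizon `T`, i.i.d. covariate–label pairs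
`(x t, y t)` independent of the past, an `ℱ (t-1)`-measurable prediction model `f t`
and query probability map `π t`, and a query indicator `ξ t` that is `Bernoulli (π t (x t))`
conditionally on the past and `(x t, y t)` (which also encodes conditional independence of
`ξ t` from `y t` given the past and `x t`). -/
structure ActiveMeanSetup (Ω : Type*) [m0 : MeasurableSpace Ω] where
  μ : Measure Ω
  isProb : IsProbabilityMeasure μ
  ℱ : Filtration ℕ m0
  T : ℕ
  x : ℕ → Ω → ℝ
  y : ℕ → Ω → ℝ
  f : ℕ → Ω → ℝ → ℝ
  π : ℕ → Ω → ℝ → ℝ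
  ξ : ℕ → Ω → ℝ
  /-- `(x t, y t)` is `ℱ t`-measurable. -/
  hx : ∀ t, Measurable[ℱ t] (x t)
  hy : ∀ t, Measurable[ℱ t] (y t)
  hξmeas : ∀ t, Measurable[ℱ t] (ξ t)
  /-- the prediction model `f t` is an `ℱ (t-1)`-measurable random function -/
  hf : ∀ t, @Measurable (Ω × ℝ) ℝ ((ℱ (t - 1)).prod (borel ℝ)) _ (Function.uncurry (f t))
  /-- the query probability map `π t` is an `ℱ (t-1)`-measurable random function -/
  hπmeas : ∀ t, @Measurable (Ω × ℝ) ℝ ((ℱ (t - 1)).prod (borel ℝ)) _ (Function.uncurry (π t))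
  /-- the query probability lies in `(0, 1]` -/
  hπ_pos : ∀ t ω, 0 < π t ω (x t ω)
  hπ_le_one : ∀ t ω, π t ω (x t ω) ≤ 1
  /-- `(x t, y t)` is independent of `ℱ (t-1)` -/
  hindep : ∀ t,
    Indep (MeasurableSpace.comap (fun ω => (x t ω, y t ω)) inferInstance) (ℱ (t - 1)) μ
  /-- the pairs `(x t, y t)` are identically distributed -/
  hident : ∀ s t,
    Measure.map (fun ω => (x s ω, y s ω)) μ = Measure.map (fun ω => (x t ω, y t ω)) μ
  /-- `ξ t` is `{0,1}`-valued -/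
  hξ01 : ∀ t, ∀ᵐ ω ∂μ, ξ t ω = 0 ∨ ξ t ω = 1
  /-- conditionally on `ℱ (t-1)` and `(x t, y t)`, the indicator `ξ t` has conditional mean
  `π t (x t)`: this says `ξ t ∼ Bernoulli (π t (x t))` given the past and `x t`, and that it is
  conditionally independent of `y t` given the past and `x t`. -/
  hξcond : ∀ t,
    μ[ξ t | (ℱ (t - 1)) ⊔ MeasurableSpace.comap (fun ω => (x t ω, y t ω)) inferInstance]
      =ᵐ[μ] fun ω => π t ω (x t ω)
  /-- integrability of the labels -/
  hyint : ∀ t, Integrable (y t) μ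
  /-- integrability of the update direction -/
  hgint : ∀ t, Integrable
    (fun ω => f t ω (x t ω) + (y t ω - f t ω (x t ω)) * ξ t ω / π t ω (x t ω)) μ

variable {Ω : Type*} [MeasurableSpace Ω]

/-- the update direction `g_t = f_t(x_t) + (y_t − f_t(x_t)) ξ_t / π_t(x_t)` -/
noncomputable def g (S : ActiveMeanSetup Ω) (t : ℕ) (ω : Ω) : ℝ :=
  S.f t ω (S.x t ω) + (S.y t ω - S.f t ω (S.x t ω)) * S.ξ t ω / S.π t ω (S.x t ω)

/-- the common mean `μ_y = E[y_t]` of the labels -/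
noncomputable def μy (S : ActiveMeanSetup Ω) : ℝ := ∫ ω, S.y 1 ω ∂S.μ

/-- the conditional variance `σ_t² = E[(g_t − μ_y)² | ℱ_{t−1}]` -/
noncomputable def condVar (S : ActiveMeanSetup Ω) (t : ℕ) : Ω → ℝ :=
  S.μ[fun ω => (g S t ω - μy S) ^ 2 | S.ℱ (t - 1)]

/-- the online update: `w_1 = 0` and `w_{t+1} = w_t + g_t / T`, i.e.
`w_{t+1} = (1/T) Σ_{s=1}^t g_s`. -/
noncomputable def w (S : ActiveMeanSetup Ω) (t : ℕ) (ω : Ω) : ℝ :=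
  (1 / (S.T : ℝ)) * ∑ s ∈ Finset.Icc 1 (t - 1), g S s ω

/-!
The centred steps `d_s := g_s - μ_y` form a martingale difference sequence bounded
by `G + |μ_y|`: given the past and `(x_s, y_s)`, inverse propensity weighting makes `g_s` unbiased
for `y_s`, and `y_s` is independent of the past with mean `μ_y`. The variance bound is pointwise,
as `(g - μ)² ≤ 2 (G² + μ²)`. For the deviation bound, the conditional Hoeffding lemma makes
`exp (λ Σ_{s ≤ k} d_s)` a submartingale with controlled mean, so Doob's maximal inequality gives a
maximal Azuma inequality; applying it on each dyadic epoch `[2^k, 2^(k+1))` and taking a union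
bound over the `⌊log₂ T⌋ + 1` epochs costs the factor `log log T`. Finally
`w_{t+1} - μ_y = (Σ_{s ≤ t} d_s) / T - (1 - t/T) μ_y`.
-/

open Finset Filter
open scoped NNReal ENNReal

section CondHoeffding

variable {Ω : Type*} {m m0 : MeasurableSpace Ω} {μ : Measure Ω} [IsProbabilityMeasure μ]
  {X : Ω → ℝ} {c : ℝ}

lemma integrable_exp_mul_of_abs_le (hX : AEStronglyMeasurable X μ)
    (hXc : ∀ᵐ ω ∂μ, |X ω| ≤ c) (t : ℝ) :
    Integrable (fun ω => Real.exp (t * X ω)) μ := by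
  refine .of_bound (hX.aemeasurable.const_mul t).exp.aestronglyMeasurable (Real.exp (|t| * c)) ?_
  filter_upwards [hXc] with ω hω
  rw [Real.norm_eq_abs, Real.abs_exp, Real.exp_le_exp]
  calc t * X ω ≤ |t| * |X ω| := (le_abs_self _).trans (abs_mul _ _).le
    _ ≤ |t| * c := by gcongr

lemma condExp_const_add_mul_of_condExp_eq_zero (hm : m ≤ m0) (hXi : Integrable X μ)
    (hX0 : μ[X | m] =ᵐ[μ] 0) (a b : ℝ) :
    μ[fun ω => a + b * X ω | m] =ᵐ[μ] fun _ => a := by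
  have hsplit : (fun ω => a + b * X ω) = (fun _ => a) + b • X := rfl
  rw [hsplit]
  refine (condExp_add (integrable_const a) (hXi.smul b) m).trans ?_
  rw [condExp_const hm]
  filter_upwards [condExp_smul (μ := μ) b X m, hX0] with ω hsmul hzero
  simp [hsmul, hzero]

variable (hm : m ≤ m0) (hX : AEStronglyMeasurable X μ) (hXc : ∀ᵐ ω ∂μ, |X ω| ≤ c)
  (hX0 : μ[X | m] =ᵐ[μ] 0)
include hm hX hXc hX0

lemma one_le_condExp_exp_mul (t : ℝ) :
    (fun _ => (1 : ℝ)) ≤ᵐ[μ] μ[fun ω => Real.exp (t * X ω) | m] := by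
  have hXi : Integrable X μ := .of_bound hX c (by simpa [Real.norm_eq_abs] using hXc)
  refine (condExp_const_add_mul_of_condExp_eq_zero hm hXi hX0 1 t).symm.le.trans ?_
  refine condExp_mono ((integrable_const 1).add (hXi.const_mul t))
    (integrable_exp_mul_of_abs_le hX hXc t) (ae_of_all _ fun ω => ?_)
  linarith [Real.add_one_le_exp (t * X ω)]

lemma condExp_exp_mul_le (hc : 0 < c) (t : ℝ) :
    μ[fun ω => Real.exp (t * X ω) | m] ≤ᵐ[μ] fun _ => Real.exp (t ^ 2 * c ^ 2 / 2) := by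
  have hXi : Integrable X μ := .of_bound hX c (by simpa [Real.norm_eq_abs] using hXc)
  -- `exp (t x)` lies below its chord over `[-c, c]`
  have hchord : (fun ω => Real.exp (t * X ω)) ≤ᵐ[μ]
      fun ω => Real.cosh (t * c) + Real.sinh (t * c) / c * X ω := by
    filter_upwards [hXc] with ω hω
    have hXc1 : |X ω / c| ≤ 1 := by rwa [abs_div, abs_of_pos hc, div_le_one hc]
    have h := Real.exp_mul_le_cosh_add_mul_sinh hXc1 (t * c)
    rw [show X ω / c * (t * c) = t * X ω by field_simp] at h
    rw [show Real.sinh (t * c) / c * X ω = X ω / c * Real.sinh (t * c) by ring]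
    exact h
  refine (condExp_mono (integrable_exp_mul_of_abs_le hX hXc t)
    ((integrable_const _).add (hXi.const_mul _)) hchord).trans ?_
  refine (condExp_const_add_mul_of_condExp_eq_zero hm hXi hX0 _ _).le.trans
    (ae_of_all _ fun _ => ?_)
  simpa [mul_pow] using Real.cosh_le_exp_half_sq (t * c)

end CondHoeffding

section Selection

variable {Ω : Type*} {m m0 : MeasurableSpace Ω} {μ : Measure Ω} [IsFiniteMeasure μ]
  {ξ p a b : Ω → ℝ}

lemma condExp_mul_one_sub_add_mul (hm : m ≤ m0) (hξ : AEStronglyMeasurable ξ μ)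
    (hξ01 : ∀ᵐ ω ∂μ, ξ ω = 0 ∨ ξ ω = 1) (hξp : μ[ξ | m] =ᵐ[μ] p)
    (ha : StronglyMeasurable[m] a) (hb : StronglyMeasurable[m] b)
    (hint : Integrable (fun ω => a ω * (1 - ξ ω) + b ω * ξ ω) μ) :
    μ[fun ω => a ω * (1 - ξ ω) + b ω * ξ ω | m] =ᵐ[μ]
      fun ω => a ω * (1 - p ω) + b ω * p ω := by
  have hξi : Integrable ξ μ := .of_bound hξ 1 (by
    filter_upwards [hξ01] with ω h; rcases h with h | h <;> simp [h])
  -- on `{ξ = 0}` and `{ξ = 1}` only one of the two summands is nonzero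
  have hai : Integrable (a * fun ω => 1 - ξ ω) μ := by
    refine hint.mono
      ((ha.mono hm).aestronglyMeasurable.mul (aestronglyMeasurable_const.sub hξ)) ?_
    filter_upwards [hξ01] with ω h; rcases h with h | h <;> simp [h]
  have hbi : Integrable (b * ξ) μ := by
    refine hint.mono ((hb.mono hm).aestronglyMeasurable.mul hξ) ?_
    filter_upwards [hξ01] with ω h; rcases h with h | h <;> simp [h]
  have hone_sub : μ[fun ω => 1 - ξ ω | m] =ᵐ[μ] fun ω => 1 - p ω := by
    refine (condExp_sub (integrable_const 1) hξi m).trans ?_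
    rw [condExp_const hm]
    filter_upwards [hξp] with ω h
    simp [h]
  filter_upwards [condExp_add hai hbi m,
    condExp_mul_of_stronglyMeasurable_left ha hai ((integrable_const 1).sub hξi),
    condExp_mul_of_stronglyMeasurable_left hb hbi hξi, hone_sub, hξp]
    with ω hadd hleft hright h1 h2
  simp only [Pi.add_apply, Pi.mul_apply] at hadd hleft hright
  rw [show (fun ω => a ω * (1 - ξ ω) + b ω * ξ ω) =
      (a * fun ω => 1 - ξ ω) + b * ξ from rfl,
    hadd, hleft, hright, h1, h2]

end Selection

lemma condExp_sq_sub_le {Ω : Type*} {m m0 : MeasurableSpace Ω} {μ : Measure Ω}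
    [IsFiniteMeasure μ] (hm : m ≤ m0) {X : Ω → ℝ} (hX : AEStronglyMeasurable X μ) {G : ℝ}
    (hXG : ∀ᵐ ω ∂μ, |X ω| ≤ G) (a : ℝ) :
    μ[fun ω => (X ω - a) ^ 2 | m] ≤ᵐ[μ] fun _ => 2 * (G ^ 2 + a ^ 2) := by
  have hsq : ∀ᵐ ω ∂μ, (X ω - a) ^ 2 ≤ 2 * (G ^ 2 + a ^ 2) := by
    filter_upwards [hXG] with ω h
    have : X ω ^ 2 ≤ G ^ 2 := sq_le_sq' (abs_le.mp h).1 (abs_le.mp h).2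
    nlinarith [sq_nonneg (X ω + a)]
  have hint : Integrable (fun ω => (X ω - a) ^ 2) μ :=
    .of_bound ((hX.sub aestronglyMeasurable_const).pow 2) (2 * (G ^ 2 + a ^ 2)) (by
      filter_upwards [hsq] with ω h
      rwa [Real.norm_of_nonneg (sq_nonneg _)])
  simpa [condExp_const hm] using condExp_mono (m := m) hint (integrable_const _) hsq

lemma ofReal_one_sub_le_measure_compl {Ω : Type*} {m0 : MeasurableSpace Ω} {μ : Measure Ω}
    [IsProbabilityMeasure μ] {s : Set Ω} {δ : ℝ} (hδ : 0 ≤ δ)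
    (hs : μ s ≤ ENNReal.ofReal δ) :
    ENNReal.ofReal (1 - δ) ≤ μ sᶜ := by
  rw [ENNReal.ofReal_sub _ hδ, ENNReal.ofReal_one, tsub_le_iff_right]
  calc 1 = μ (sᶜ ∪ s) := by simp
    _ ≤ μ sᶜ + μ s := measure_union_le _ _
    _ ≤ μ sᶜ + ENNReal.ofReal δ := by gcongr

lemma measurable_comp_prodMk {Ω : Type*} {m₁ m : MeasurableSpace Ω} (hle : m₁ ≤ m)
    {X : Ω → ℝ} (hX : Measurable[m] X) {F : Ω → ℝ → ℝ}
    (hF : @Measurable (Ω × ℝ) ℝ (m₁.prod (borel ℝ)) _ (Function.uncurry F)) :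
    Measurable[m] fun ω => F ω (X ω) :=
  hF.comp ((measurable_id'' hle).prodMk hX)

section Azuma

variable {Ω : Type*} {m0 : MeasurableSpace Ω} {μ : Measure Ω}
  {ℱ : Filtration ℕ m0} {d : ℕ → Ω → ℝ} {c : ℝ}

def partialSum (d : ℕ → Ω → ℝ) (k : ℕ) (ω : Ω) : ℝ := ∑ s ∈ Icc 1 k, d s ω

lemma partialSum_succ (d : ℕ → Ω → ℝ) (k : ℕ) (ω : Ω) :
    partialSum d (k + 1) ω = partialSum d k ω + d (k + 1) ω :=
  sum_Icc_succ_top (Nat.le_add_left 1 k) _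

lemma partialSum_neg (d : ℕ → Ω → ℝ) (k : ℕ) (ω : Ω) :
    partialSum (fun s ω => -d s ω) k ω = -partialSum d k ω := by
  simp [partialSum]

lemma measurable_partialSum (hmeas : ∀ s, Measurable[ℱ s] (d s)) (k : ℕ) :
    Measurable[ℱ k] (partialSum d k) :=
  Finset.measurable_sum _ fun s hs => (hmeas s).mono (ℱ.mono (mem_Icc.mp hs).2) le_rfl

lemma ae_abs_partialSum_le (hbdd : ∀ s, ∀ᵐ ω ∂μ, |d s ω| ≤ c) (k : ℕ) :
    ∀ᵐ ω ∂μ, |partialSum d k ω| ≤ k * c := by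
  filter_upwards [ae_all_iff.mpr hbdd] with ω hω
  calc |partialSum d k ω| ≤ ∑ s ∈ Icc 1 k, |d s ω| := abs_sum_le_sum_abs _ _
    _ ≤ ∑ s ∈ Icc 1 k, c := sum_le_sum fun s _ => hω s
    _ = k * c := by simp

variable [IsProbabilityMeasure μ] (hmeas : ∀ s, Measurable[ℱ s] (d s))
  (hbdd : ∀ s, ∀ᵐ ω ∂μ, |d s ω| ≤ c)
  (hmean : ∀ s, μ[d (s + 1) | ℱ s] =ᵐ[μ] 0)
include hmeas hbdd

lemma integrable_exp_mul_partialSum (t : ℝ) (k : ℕ) :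
    Integrable (fun ω => Real.exp (t * partialSum d k ω)) μ :=
  integrable_exp_mul_of_abs_le
    ((measurable_partialSum hmeas k).mono (ℱ.le k) le_rfl).aestronglyMeasurable
    (ae_abs_partialSum_le hbdd k) t

lemma condExp_exp_mul_partialSum_succ (t : ℝ) (k : ℕ) :
    μ[fun ω => Real.exp (t * partialSum d (k + 1) ω) | ℱ k] =ᵐ[μ]
      fun ω => Real.exp (t * partialSum d k ω) *
        μ[fun ω => Real.exp (t * d (k + 1) ω) | ℱ k] ω := by
  have hprod : (fun ω => Real.exp (t * partialSum d (k + 1) ω)) =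
      (fun ω => Real.exp (t * partialSum d k ω)) * fun ω => Real.exp (t * d (k + 1) ω) := by
    ext ω
    simp [partialSum_succ, mul_add, Real.exp_add]
  rw [hprod]
  exact condExp_mul_of_stronglyMeasurable_left
    ((measurable_partialSum hmeas k).const_mul t).exp.stronglyMeasurable
    (hprod ▸ integrable_exp_mul_partialSum hmeas hbdd t (k + 1))
    (integrable_exp_mul_of_abs_le ((hmeas _).mono (ℱ.le _) le_rfl).aestronglyMeasurable
      (hbdd _) t)

include hmean

lemma submartingale_exp_mul_partialSum (t : ℝ) :
    Submartingale (fun k ω => Real.exp (t * partialSum d k ω)) ℱ μ := by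
  refine submartingale_nat
    (fun k => ((measurable_partialSum hmeas k).const_mul t).exp.stronglyMeasurable)
    (integrable_exp_mul_partialSum hmeas hbdd t) fun k => ?_
  filter_upwards [condExp_exp_mul_partialSum_succ hmeas hbdd t k,
    one_le_condExp_exp_mul (ℱ.le k) ((hmeas _).mono (ℱ.le _) le_rfl).aestronglyMeasurable
      (hbdd (k + 1)) (hmean k) t] with ω hsucc hone
  rw [hsucc]
  exact le_mul_of_one_le_right (Real.exp_pos _).le hone

lemma integral_exp_mul_partialSum_le (hc : 0 < c) (t : ℝ) (n : ℕ) :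
    ∫ ω, Real.exp (t * partialSum d n ω) ∂μ ≤ Real.exp (t ^ 2 * c ^ 2 / 2 * n) := by
  induction n with
  | zero => simp [partialSum]
  | succ n ih =>
    have hstep : μ[fun ω => Real.exp (t * partialSum d (n + 1) ω) | ℱ n] ≤ᵐ[μ]
        fun ω => Real.exp (t * partialSum d n ω) * Real.exp (t ^ 2 * c ^ 2 / 2) := by
      filter_upwards [condExp_exp_mul_partialSum_succ hmeas hbdd t n,
        condExp_exp_mul_le (ℱ.le n) ((hmeas _).mono (ℱ.le _) le_rfl).aestronglyMeasurable
          (hbdd (n + 1)) (hmean n) hc t] with ω hsucc hmgf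
      rw [hsucc]
      exact mul_le_mul_of_nonneg_left hmgf (Real.exp_pos _).le
    calc ∫ ω, Real.exp (t * partialSum d (n + 1) ω) ∂μ
        = ∫ ω, μ[fun ω => Real.exp (t * partialSum d (n + 1) ω) | ℱ n] ω ∂μ :=
          (integral_condExp (ℱ.le n)).symm
      _ ≤ ∫ ω, Real.exp (t * partialSum d n ω) * Real.exp (t ^ 2 * c ^ 2 / 2) ∂μ :=
          integral_mono_ae integrable_condExp
            ((integrable_exp_mul_partialSum hmeas hbdd t n).mul_const _) hstep
      _ ≤ Real.exp (t ^ 2 * c ^ 2 / 2 * n) * Real.exp (t ^ 2 * c ^ 2 / 2) := by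
          rw [integral_mul_const]; gcongr
      _ = Real.exp (t ^ 2 * c ^ 2 / 2 * ↑(n + 1)) := by
          rw [← Real.exp_add]; push_cast; ring_nf

lemma measure_exists_le_partialSum_le (hc : 0 < c) (n : ℕ) {a : ℝ} (ha : 0 < a) :
    μ {ω | ∃ k ≤ n, a ≤ partialSum d k ω} ≤
      ENNReal.ofReal (Real.exp (-a ^ 2 / (2 * n * c ^ 2))) := by
  rcases n.eq_zero_or_pos with rfl | hn
  · simpa using prob_le_one
  -- the minimiser of `t ^ 2 * c ^ 2 * n / 2 - t * a`
  set t := a / (n * c ^ 2)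
  have ht : 0 < t := by positivity
  set ε : ℝ≥0 := (Real.exp (t * a)).toNNReal
  have hmax := maximal_ineq (submartingale_exp_mul_partialSum hmeas hbdd hmean t)
    (fun _ _ => (Real.exp_pos _).le) (ε := ε) n
  set E := {ω | (ε : ℝ) ≤ (range (n + 1)).sup' nonempty_range_add_one
    fun k => Real.exp (t * partialSum d k ω)}
  have hsub : {ω | ∃ k ≤ n, a ≤ partialSum d k ω} ⊆ E := by
    rintro ω ⟨k, hk, hak⟩
    rw [Set.mem_ofPred_eq, Real.coe_toNNReal _ (Real.exp_pos _).le]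
    refine le_trans ?_ (le_sup' (fun k => Real.exp (t * partialSum d k ω))
      (mem_range.mpr (Nat.lt_succ_of_le hk)))
    exact Real.exp_le_exp.mpr (mul_le_mul_of_nonneg_left hak ht.le)
  have hint :
      ∫ ω in E, Real.exp (t * partialSum d n ω) ∂μ ≤ Real.exp (t ^ 2 * c ^ 2 / 2 * n) :=
    (setIntegral_le_integral (integrable_exp_mul_partialSum hmeas hbdd t n)
      (ae_of_all _ fun _ => (Real.exp_pos _).le)).trans
      (integral_exp_mul_partialSum_le hmeas hbdd hmean hc t n)
  have hexp : Real.exp (t ^ 2 * c ^ 2 / 2 * n) / Real.exp (t * a) =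
      Real.exp (-a ^ 2 / (2 * n * c ^ 2)) := by
    rw [← Real.exp_sub]; congr 1; simp only [t]; field_simp; ring
  calc μ {ω | ∃ k ≤ n, a ≤ partialSum d k ω} ≤ μ E := measure_mono hsub
    _ ≤ ENNReal.ofReal (Real.exp (t ^ 2 * c ^ 2 / 2 * n)) / ε := by
        rw [ENNReal.le_div_iff_mul_le (.inl (by simp [ε, Real.exp_pos])) (.inl ENNReal.coe_ne_top),
          mul_comm]
        exact hmax.trans (ENNReal.ofReal_le_ofReal hint)
    _ = ENNReal.ofReal (Real.exp (-a ^ 2 / (2 * n * c ^ 2))) := by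
        rw [show (ε : ℝ≥0∞) = ENNReal.ofReal (Real.exp (t * a)) from rfl,
          ← ENNReal.ofReal_div_of_pos (Real.exp_pos _), hexp]

lemma measure_exists_le_abs_partialSum_le (hc : 0 < c) (n : ℕ) {a : ℝ} (ha : 0 < a) :
    μ {ω | ∃ k ≤ n, a ≤ |partialSum d k ω|} ≤
      ENNReal.ofReal (2 * Real.exp (-a ^ 2 / (2 * n * c ^ 2))) := by
  have hmean_neg : ∀ s, μ[-d (s + 1) | ℱ s] =ᵐ[μ] 0 := fun s =>
    (condExp_neg _ _).trans (by filter_upwards [hmean s] with ω h; simp [h])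
  have hneg := measure_exists_le_partialSum_le (fun s => (hmeas s).neg)
    (fun s => by simpa using hbdd s) hmean_neg hc n ha
  have hsub : {ω | ∃ k ≤ n, a ≤ |partialSum d k ω|} ⊆
      {ω | ∃ k ≤ n, a ≤ partialSum d k ω} ∪
        {ω | ∃ k ≤ n, a ≤ partialSum (fun s ω => -d s ω) k ω} := by
    rintro ω ⟨k, hk, hak⟩
    rcases le_abs'.mp hak with h | h
    · exact .inr ⟨k, hk, by rw [partialSum_neg]; linarith⟩
    · exact .inl ⟨k, hk, h⟩
  calc μ {ω | ∃ k ≤ n, a ≤ |partialSum d k ω|}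
      ≤ μ {ω | ∃ k ≤ n, a ≤ partialSum d k ω} +
        μ {ω | ∃ k ≤ n, a ≤ partialSum (fun s ω => -d s ω) k ω} :=
        (measure_mono hsub).trans (measure_union_le _ _)
    _ ≤ ENNReal.ofReal (Real.exp (-a ^ 2 / (2 * n * c ^ 2))) +
        ENNReal.ofReal (Real.exp (-a ^ 2 / (2 * n * c ^ 2))) :=
        add_le_add (measure_exists_le_partialSum_le hmeas hbdd hmean hc n ha) hneg
    _ = ENNReal.ofReal (2 * Real.exp (-a ^ 2 / (2 * n * c ^ 2))) := by
        rw [← ENNReal.ofReal_add (Real.exp_pos _).le (Real.exp_pos _).le, ← two_mul]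

end Azuma

lemma one_lt_log_div {x δ : ℝ} (hx : 1 ≤ x) (hδ0 : 0 < δ) (hδ1 : δ < 1 / Real.exp 1) :
    1 < Real.log (x / δ) := by
  rw [Real.lt_log_iff_exp_lt (by positivity)]
  calc Real.exp 1 < 1 / δ := by rwa [lt_one_div (Real.exp_pos 1) hδ0]
    _ ≤ x / δ := by gcongr

lemma nat_log_add_one_mul_le {T : ℕ} (hT : 4 ≤ T) {δ : ℝ} (hδ0 : 0 < δ)
    (hδ : δ ≤ 1 / 2) :
    (Nat.log 2 T + 1) * (2 * (δ / Real.log T) ^ 4) ≤ δ := by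
  set x := Real.log T
  have hx : 1 < x := by
    have h4 : Real.log 4 ≤ x := Real.log_le_log (by norm_num) (by exact_mod_cast hT)
    have : Real.log 4 = 2 * Real.log 2 := by
      rw [show (4 : ℝ) = 2 ^ 2 by norm_num, Real.log_pow]; norm_num
    linarith [Real.log_two_gt_d9]
  have hK : (Nat.log 2 T : ℝ) * Real.log 2 ≤ x := by
    rw [← Real.log_pow]
    exact Real.log_le_log (by positivity) (by exact_mod_cast Nat.pow_log_le_self 2 (by omega))
  have hK3 : (Nat.log 2 T : ℝ) + 1 ≤ 3 * x := by nlinarith [Real.log_two_gt_d9]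
  have hδ3 : δ ^ 3 ≤ 1 / 8 := by
    calc δ ^ 3 ≤ (1 / 2) ^ 3 := by gcongr
      _ = 1 / 8 := by norm_num
  calc (Nat.log 2 T + 1) * (2 * (δ / x) ^ 4) ≤ 3 * x * (2 * (δ / x) ^ 4) := by gcongr
    _ = 6 * δ ^ 3 / x ^ 3 * δ := by field_simp; ring
    _ ≤ 6 * δ ^ 3 * δ := by
        gcongr
        exact div_le_self (by positivity) (one_le_pow₀ hx.le)
    _ ≤ δ := by nlinarith

section Peeling

variable {Ω : Type*} {m0 : MeasurableSpace Ω} {μ : Measure Ω} [IsProbabilityMeasure μ]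
  {ℱ : Filtration ℕ m0} {d : ℕ → Ω → ℝ} {c : ℝ}
  (hmeas : ∀ s, Measurable[ℱ s] (d s)) (hbdd : ∀ s, ∀ᵐ ω ∂μ, |d s ω| ≤ c)
  (hmean : ∀ s, μ[d (s + 1) | ℱ s] =ᵐ[μ] 0) (hc : 0 < c)
include hmeas hbdd hmean hc

lemma measure_exists_le_abs_partialSum_pow_two_le (k : ℕ) {L : ℝ} (hL : 0 < L) :
    μ {ω | ∃ j ≤ 2 ^ (k + 1), 4 * c * √(2 ^ k * L) ≤ |partialSum d j ω|} ≤
      ENNReal.ofReal (2 * Real.exp (-(4 * L))) := by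
  have hexponent : -(4 * c * √(2 ^ k * L)) ^ 2 / (2 * ((2 ^ (k + 1) : ℕ) : ℝ) * c ^ 2) =
      -(4 * L) := by
    rw [mul_pow, Real.sq_sqrt (by positivity)]
    push_cast
    field_simp
    ring
  have h := measure_exists_le_abs_partialSum_le hmeas hbdd hmean hc (2 ^ (k + 1))
    (a := 4 * c * √(2 ^ k * L)) (by positivity)
  rwa [hexponent] at h

lemma measure_exists_abs_partialSum_gt_le {T : ℕ} (hT : 4 ≤ T) {δ : ℝ} (hδ0 : 0 < δ)
    (hδ1 : δ < 1 / Real.exp 1) :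
    μ {ω | ∃ t ∈ Icc 1 T,
        4 * c * √(t * Real.log (Real.log T / δ)) < |partialSum d t ω|} ≤
      ENNReal.ofReal δ := by
  set L := Real.log (Real.log T / δ)
  have hlogT : 1 ≤ Real.log T := by
    rw [Real.le_log_iff_exp_le (by positivity)]
    have := Real.exp_one_lt_d9
    have : (4 : ℝ) ≤ T := by exact_mod_cast hT
    linarith
  have hL : 1 < L := one_lt_log_div hlogT hδ0 hδ1
  have hexpL : Real.exp (-(4 * L)) = (δ / Real.log T) ^ 4 := by
    rw [show -(4 * L) = (4 : ℕ) * -L by push_cast; ring, Real.exp_nat_mul, Real.exp_neg,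
      Real.exp_log (by positivity), inv_div]
  have hcover : {ω | ∃ t ∈ Icc 1 T, 4 * c * √(t * L) < |partialSum d t ω|} ⊆
      ⋃ k ∈ range (Nat.log 2 T + 1),
        {ω | ∃ j ≤ 2 ^ (k + 1), 4 * c * √(2 ^ k * L) ≤ |partialSum d j ω|} := by
    rintro ω ⟨t, ht, hbig⟩
    obtain ⟨ht1, htT⟩ := mem_Icc.mp ht
    refine Set.mem_biUnion (x := Nat.log 2 t)
      (mem_range.mpr (Nat.lt_succ_of_le (Nat.log_mono_right htT))) ⟨t, ?_, le_of_lt ?_⟩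
    · exact (Nat.lt_pow_succ_log_self (by norm_num) t).le
    · refine lt_of_le_of_lt ?_ hbig
      gcongr
      exact_mod_cast Nat.pow_log_le_self 2 (by omega)
  have hδ2 : δ ≤ 1 / 2 := by
    refine hδ1.le.trans (one_div_le_one_div_of_le (by norm_num) ?_)
    linarith [Real.add_one_le_exp 1]
  calc μ {ω | ∃ t ∈ Icc 1 T, 4 * c * √(t * L) < |partialSum d t ω|}
      ≤ ∑ k ∈ range (Nat.log 2 T + 1),
          μ {ω | ∃ j ≤ 2 ^ (k + 1), 4 * c * √(2 ^ k * L) ≤ |partialSum d j ω|} :=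
        (measure_mono hcover).trans (measure_biUnion_finset_le _ _)
    _ ≤ ∑ k ∈ range (Nat.log 2 T + 1), ENNReal.ofReal (2 * (δ / Real.log T) ^ 4) :=
        sum_le_sum fun k _ => hexpL ▸
          measure_exists_le_abs_partialSum_pow_two_le hmeas hbdd hmean hc k (by linarith)
    _ = ENNReal.ofReal ((Nat.log 2 T + 1) * (2 * (δ / Real.log T) ^ 4)) := by
        rw [sum_const, card_range, nsmul_eq_mul, ← ENNReal.ofReal_natCast,
          ← ENNReal.ofReal_mul (by positivity)]
        norm_num
    _ ≤ ENNReal.ofReal δ := ENNReal.ofReal_le_ofReal (nat_log_add_one_mul_le hT hδ0 hδ2)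

end Peeling

namespace ActiveMeanSetup

variable {Ω : Type*} [m0 : MeasurableSpace Ω] (S : ActiveMeanSetup Ω) (t : ℕ)

abbrev beforeQuery : MeasurableSpace Ω :=
  S.ℱ (t - 1) ⊔ MeasurableSpace.comap (fun ω => (S.x t ω, S.y t ω)) inferInstance

lemma measurable_pair : Measurable fun ω => (S.x t ω, S.y t ω) :=
  ((S.hx t).mono (S.ℱ.le t) le_rfl).prodMk ((S.hy t).mono (S.ℱ.le t) le_rfl)

lemma beforeQuery_le : S.beforeQuery t ≤ m0 :=
  sup_le (S.ℱ.le _) (S.measurable_pair t).comap_le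

lemma measurable_g : Measurable[S.ℱ t] (g S t) := by
  have hle : S.ℱ (t - 1) ≤ S.ℱ t := S.ℱ.mono (Nat.sub_le t 1)
  have hfx := measurable_comp_prodMk hle (S.hx t) (S.hf t)
  exact hfx.add ((((S.hy t).sub hfx).mul (S.hξmeas t)).div
    (measurable_comp_prodMk hle (S.hx t) (S.hπmeas t)))

lemma integral_y : ∫ ω, S.y t ω ∂S.μ = μy S := by
  have hy : ∀ s,
      ∫ ω, S.y s ω ∂S.μ = ∫ p, p.2 ∂(S.μ.map fun ω => (S.x s ω, S.y s ω)) := fun s =>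
    (integral_map (S.measurable_pair s).aemeasurable measurable_snd.aestronglyMeasurable).symm
  rw [μy, hy, hy, S.hident t 1]

lemma condExp_g_beforeQuery : S.μ[g S t | S.beforeQuery t] =ᵐ[S.μ] S.y t := by
  have := S.isProb
  have hpair : Measurable[S.beforeQuery t] fun ω => (S.x t ω, S.y t ω) :=
    measurable_iff_comap_le.mpr le_sup_right
  have hx : Measurable[S.beforeQuery t] (S.x t) := measurable_fst.comp hpair
  have hy : Measurable[S.beforeQuery t] (S.y t) := measurable_snd.comp hpair
  have hf := measurable_comp_prodMk le_sup_left hx (S.hf t)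
  have hπ := measurable_comp_prodMk le_sup_left hx (S.hπmeas t)
  have hsplit : g S t =ᵐ[S.μ] fun ω => S.f t ω (S.x t ω) * (1 - S.ξ t ω) +
        (S.f t ω (S.x t ω) + (S.y t ω - S.f t ω (S.x t ω)) / S.π t ω (S.x t ω)) *
          S.ξ t ω := by
    filter_upwards [S.hξ01 t] with ω h
    have := (S.hπ_pos t ω).ne'
    rcases h with h | h <;> simp only [g, h] <;> field_simp <;> ring
  refine (condExp_congr_ae hsplit).trans ?_
  refine (condExp_mul_one_sub_add_mul (S.beforeQuery_le t)
    ((S.hξmeas t).mono (S.ℱ.le t) le_rfl).aestronglyMeasurable (S.hξ01 t) (S.hξcond t)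
    hf.stronglyMeasurable (hf.add ((hy.sub hf).div hπ)).stronglyMeasurable
    ((integrable_congr hsplit).mp (S.hgint t))).trans (ae_of_all _ fun ω => ?_)
  have := (S.hπ_pos t ω).ne'
  simp only [Pi.add_apply, Pi.sub_apply, Pi.div_apply]
  field_simp
  ring

lemma condExp_g : S.μ[g S t | S.ℱ (t - 1)] =ᵐ[S.μ] fun _ => μy S := by
  have := S.isProb
  calc S.μ[g S t | S.ℱ (t - 1)]
      =ᵐ[S.μ] S.μ[S.μ[g S t | S.beforeQuery t] | S.ℱ (t - 1)] :=
        (condExp_condExp_of_le le_sup_left (S.beforeQuery_le t)).symm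
    _ =ᵐ[S.μ] S.μ[S.y t | S.ℱ (t - 1)] := condExp_congr_ae (S.condExp_g_beforeQuery t)
    _ =ᵐ[S.μ] fun _ => μy S := by
        rw [← S.integral_y t]
        exact condExp_indep_eq (μ := S.μ) (S.measurable_pair t).comap_le (S.ℱ.le _)
          (measurable_snd.comp (measurable_iff_comap_le.mpr le_rfl)).stronglyMeasurable
          (S.hindep t)

variable {G : ℝ}

lemma ae_sum_condVar_le (hbound : ∀ t, ∀ᵐ ω ∂S.μ, |g S t ω| ≤ G) (t : ℕ) :
    ∀ᵐ ω ∂S.μ, ∑ s ∈ Icc 1 t, condVar S s ω ≤ 2 * t * (G ^ 2 + μy S ^ 2) := by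
  have := S.isProb
  have hle : ∀ s, ∀ᵐ ω ∂S.μ, condVar S s ω ≤ 2 * (G ^ 2 + μy S ^ 2) := fun s =>
    condExp_sq_sub_le (S.ℱ.le _)
      ((S.measurable_g s).mono (S.ℱ.le s) le_rfl).aestronglyMeasurable (hbound s) (μy S)
  filter_upwards [ae_all_iff.mpr hle] with ω hω
  calc ∑ s ∈ Icc 1 t, condVar S s ω ≤ ∑ s ∈ Icc 1 t, 2 * (G ^ 2 + μy S ^ 2) :=
        sum_le_sum fun s _ => hω s
    _ = 2 * t * (G ^ 2 + μy S ^ 2) := by simp; ring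

lemma condExp_g_succ_sub_μy (s : ℕ) :
    S.μ[fun ω => g S (s + 1) ω - μy S | S.ℱ s] =ᵐ[S.μ] 0 := by
  have := S.isProb
  have hg : Integrable (g S (s + 1)) S.μ := S.hgint (s + 1)
  have hmean := S.condExp_g (s + 1)
  rw [Nat.add_sub_cancel] at hmean
  refine (condExp_sub hg (integrable_const (μy S)) _).trans ?_
  rw [condExp_const (S.ℱ.le s)]
  filter_upwards [hmean] with ω h
  simp [h]

lemma w_succ_sub_μy (t : ℕ) (ω : Ω) :
    w S (t + 1) ω - μy S =
      partialSum (fun s ω => g S s ω - μy S) t ω / S.T - (1 - t / S.T) * μy S := by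
  simp only [w, partialSum, Nat.add_sub_cancel, sum_sub_distrib, sum_const, Nat.card_Icc,
    nsmul_eq_mul]
  ring

lemma abs_w_succ_sub_μy_le {t : ℕ} (ht : t ∈ Icc 1 S.T) {L : ℝ} {ω : Ω}
    (hsum : |partialSum (fun s ω => g S s ω - μy S) t ω| ≤ 4 * (G + |μy S|) * √(t * L)) :
    |w S (t + 1) ω - μy S| ≤
      2 * max (2 * √(2 * t * (G ^ 2 + μy S ^ 2))) ((G + |μy S|) * √L) * √L / S.T +
        (1 - t / S.T) * |μy S| := by
  obtain ⟨ht1, htT⟩ := mem_Icc.mp ht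
  have hT : (0 : ℝ) < S.T := by exact_mod_cast (by omega : 0 < S.T)
  have htT' : (t : ℝ) / S.T ≤ 1 := (div_le_one hT).mpr (by exact_mod_cast htT)
  -- `(G + |μ|)² ≤ 2 (G² + μ²)`
  have hc : (G + |μy S|) * √t ≤ √(2 * t * (G ^ 2 + μy S ^ 2)) := by
    rw [show 2 * t * (G ^ 2 + μy S ^ 2) = t * (2 * (G ^ 2 + μy S ^ 2)) by ring,
      Real.sqrt_mul (Nat.cast_nonneg t), mul_comm]
    gcongr
    refine Real.le_sqrt_of_sq_le ?_
    nlinarith [sq_abs (μy S), sq_nonneg (G - |μy S|)]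
  have hsum' : |partialSum (fun s ω => g S s ω - μy S) t ω| ≤
      2 * max (2 * √(2 * t * (G ^ 2 + μy S ^ 2))) ((G + |μy S|) * √L) * √L := by
    refine hsum.trans ?_
    rw [Real.sqrt_mul (Nat.cast_nonneg t)]
    have := le_max_left (2 * √(2 * t * (G ^ 2 + μy S ^ 2))) ((G + |μy S|) * √L)
    nlinarith [Real.sqrt_nonneg L]
  rw [w_succ_sub_μy]
  refine (abs_sub _ _).trans ?_
  rw [abs_div, abs_of_pos hT, abs_mul, abs_of_nonneg (sub_nonneg.mpr htT')]
  gcongr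

end ActiveMeanSetup

/-- If `|g_t| ≤ G` a.s. for all `t`, then `Σ_{s=1}^t σ_s² ≤ 2t(G² + μ_y²)` a.s. for every `t`;
consequently, for `T ≥ 4` and any `δ ∈ (0, 1/e)`, with probability at least `1 − δ`,
simultaneously for all `t ∈ [T]`,
`|w_{t+1} − μ_y| ≤ (2 max{2 √(2t(G² + μ_y²)), (G + |μ_y|) √(log(log T / δ))}
  √(log(log T / δ))) / T + (1 − t/T) |μ_y|`, a bound of order `√t / T = O(1/√t)` for `t` of
order `T`. -/
theorem trivial_variance_bound (S : ActiveMeanSetup Ω) (hT : 4 ≤ S.T)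
    (G : ℝ) (hG : 0 < G) (hbound : ∀ t, ∀ᵐ ω ∂S.μ, |g S t ω| ≤ G)
    (δ : ℝ) (hδ0 : 0 < δ) (hδ1 : δ < 1 / Real.exp 1) :
    (∀ t, ∀ᵐ ω ∂S.μ,
      ∑ s ∈ Finset.Icc 1 t, condVar S s ω ≤ 2 * t * (G ^ 2 + (μy S) ^ 2)) ∧
      ENNReal.ofReal (1 - δ) ≤
        S.μ {ω | ∀ t ∈ Finset.Icc 1 S.T,
          |w S (t + 1) ω - μy S| ≤
            2 * max (2 * Real.sqrt (2 * t * (G ^ 2 + (μy S) ^ 2)))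
                ((G + |μy S|) * Real.sqrt (Real.log (Real.log S.T / δ)))
              * Real.sqrt (Real.log (Real.log S.T / δ)) / (S.T : ℝ)
            + (1 - (t : ℝ) / (S.T : ℝ)) * |μy S|} := by
  have := S.isProb
  refine ⟨S.ae_sum_condVar_le hbound, ?_⟩
  have hbdd : ∀ s, ∀ᵐ ω ∂S.μ, |g S s ω - μy S| ≤ G + |μy S| := fun s => by
    filter_upwards [hbound s] with ω h
    exact (abs_sub _ _).trans (by gcongr)
  have hbad := measure_exists_abs_partialSum_gt_le (fun s => (S.measurable_g s).sub_const _)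
    hbdd S.condExp_g_succ_sub_μy (by positivity) hT hδ0 hδ1
  refine (ofReal_one_sub_le_measure_compl hδ0.le hbad).trans (measure_mono fun ω hω t ht => ?_)
  exact S.abs_w_succ_sub_μy_le ht (not_lt.mp fun h => hω ⟨t, ht, h⟩)
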